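/- Weak forward-reverse bisimilarity satisfies the stuttering property: if P_0 →τ P_1 →τ ... →τ P_n is a sequence of τ-transitions with n ≥ 1 and P_0 ≈FRB P_n, then P_i ≈FRB P_0 for all 0 ≤ i ≤ n. -/
import Mathlib


inductive Proc (A : Type) : Type
  | nil : Proc A
  | pre : A → Proc A → Proc A
  | exe : A → Proc A → Proc A
  | choice : Proc A → Proc A → Proc A

inductive Initial {A : Type} : Proc A → Prop
  | nil : Initial .nil
  | pre {a : A} {P : Proc A} : Initial P → Initial (.pre a P)
  | choice {P Q : Proc A} : Initial P → Initial Q → Initial (.choice P Q)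

inductive Final {A : Type} : Proc A → Prop
  | nil : Final .nil
  | exe {a : A} {P : Proc A} : Final P → Final (.exe a P)
  | choiceL {P Q : Proc A} : Final P → Initial Q → Final (.choice P Q)
  | choiceR {P Q : Proc A} : Initial P → Final Q → Final (.choice P Q)

inductive Reachable {A : Type} : Proc A → Prop
  | nil : Reachable .nil
  | pre {a : A} {P : Proc A} : Initial P → Reachable (.pre a P)
  | exe {a : A} {P : Proc A} : Reachable P → Reachable (.exe a P)
  | choiceL {P Q : Proc A} : Reachable P → Initial Q → Reachable (.choice P Q)
  | choiceR {P Q : Proc A} : Initial P → Reachable Q → Reachable (.choice P Q)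

inductive Tr {A : Type} : Proc A → A → Proc A → Prop
  | actf {a : A} {P : Proc A} : Initial P → Tr (.pre a P) a (.exe a P)
  | actp {a b : A} {P P' : Proc A} : Tr P b P' → Tr (.exe a P) b (.exe a P')
  | chol {a : A} {P1 P1' P2 : Proc A} : Tr P1 a P1' → Initial P2 →
      Tr (.choice P1 P2) a (.choice P1' P2)
  | chor {a : A} {P1 P2 P2' : Proc A} : Tr P2 a P2' → Initial P1 →
      Tr (.choice P1 P2) a (.choice P1 P2')

def TauStar {A : Type} (τ : A) : Proc A → Proc A → Prop :=
  Relation.ReflTransGen (fun p q => Tr p τ q)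

def WeakStep {A : Type} (τ a : A) (P Q : Proc A) : Prop :=
  ∃ P1 P2, TauStar τ P P1 ∧ Tr P1 a P2 ∧ TauStar τ P2 Q

def IsWeakFwdBisim {A : Type} (τ : A) (B : Proc A → Proc A → Prop) : Prop :=
  (∀ P Q, B P Q → B Q P) ∧
  (∀ P Q P', B P Q → Tr P τ P' → ∃ Q', TauStar τ Q Q' ∧ B P' Q') ∧
  (∀ P Q a P', B P Q → Tr P a P' → a ≠ τ → ∃ Q', WeakStep τ a Q Q' ∧ B P' Q')

def IsWeakFRBisim {A : Type} (τ : A) (B : Proc A → Proc A → Prop) : Prop :=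
  (∀ P Q, B P Q → B Q P) ∧
  (∀ P Q P', B P Q → Tr P τ P' → ∃ Q', TauStar τ Q Q' ∧ B P' Q') ∧
  (∀ P Q a P', B P Q → Tr P a P' → a ≠ τ → ∃ Q', WeakStep τ a Q Q' ∧ B P' Q') ∧
  (∀ P Q P', B P Q → Tr P' τ P → ∃ Q', TauStar τ Q' Q ∧ B P' Q') ∧
  (∀ P Q a P', B P Q → Tr P' a P → a ≠ τ → ∃ Q', WeakStep τ a Q' Q ∧ B P' Q')

def WFB {A : Type} (τ : A) (P Q : Proc A) : Prop := ∃ B, IsWeakFwdBisim τ B ∧ B P Q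

def WFRB {A : Type} (τ : A) (P Q : Proc A) : Prop := ∃ B, IsWeakFRBisim τ B ∧ B P Q

def IsBranchingBisim {A : Type} (τ : A) (B : Proc A → Proc A → Prop) : Prop :=
  (∀ P Q, B P Q → B Q P) ∧
  (∀ P Q a P', B P Q → Tr P a P' →
    (a = τ ∧ B P' Q) ∨
    ∃ Q1 Q', TauStar τ Q Q1 ∧ Tr Q1 a Q' ∧ B P Q1 ∧ B P' Q')

def BB {A : Type} (τ : A) (P Q : Proc A) : Prop := ∃ B, IsBranchingBisim τ B ∧ B P Q

def ReachFrom {A : Type} : Proc A → Proc A → Prop :=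
  Relation.ReflTransGen (fun p q => ∃ a, Tr p a q)

lemma tr_not_initial {A : Type} {P Q : Proc A} {a : A} (h : Tr P a Q) : ¬ Initial Q := by
  induction h with
  | actf _ => intro h; cases h
  | actp _ ih => intro h; cases h
  | chol _ _ ih => intro h; cases h with | choice h1 h2 => exact ih h1
  | chor _ _ ih => intro h; cases h with | choice h1 h2 => exact ih h2

lemma tr_rev_det {A : Type} {P P' Q : Proc A} {a b : A}
    (h1 : Tr P a Q) (h2 : Tr P' b Q) : P = P' ∧ a = b := by
  induction h1 generalizing P' b with
  | actf hI => cases h2 with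
    | actf _ => exact ⟨rfl, rfl⟩
    | actp h => exact absurd hI (tr_not_initial h)
  | actp h ih => cases h2 with
    | actf hI => exact absurd hI (tr_not_initial h)
    | actp h' => obtain ⟨rfl, rfl⟩ := ih h'; exact ⟨rfl, rfl⟩
  | chol h hI ih => cases h2 with
    | chol h' hI' => obtain ⟨rfl, rfl⟩ := ih h'; exact ⟨rfl, rfl⟩
    | chor h' hI' => exact absurd hI' (tr_not_initial h)
  | chor h hI ih => cases h2 with
    | chol h' hI' => exact absurd hI' (tr_not_initial h)
    | chor h' hI' => obtain ⟨rfl, rfl⟩ := ih h'; exact ⟨rfl, rfl⟩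

lemma wfrb_refl {A : Type} (τ : A) (P : Proc A) : WFRB τ P P := by
  refine ⟨Eq, ⟨fun P Q h => h.symm, ?_, ?_, ?_, ?_⟩, rfl⟩
  · rintro P Q P' rfl h; exact ⟨P', Relation.ReflTransGen.single h, rfl⟩
  · rintro P Q a P' rfl h _
    exact ⟨P', ⟨P, P', Relation.ReflTransGen.refl, h, Relation.ReflTransGen.refl⟩, rfl⟩
  · rintro P Q P' rfl h; exact ⟨P', Relation.ReflTransGen.single h, rfl⟩
  · rintro P Q a P' rfl h _
    exact ⟨P', ⟨P', P, Relation.ReflTransGen.refl, h, Relation.ReflTransGen.refl⟩, rfl⟩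

lemma wfrb_is_bisim {A : Type} (τ : A) : IsWeakFRBisim τ (WFRB τ) := by
  refine ⟨?_, ?_, ?_, ?_, ?_⟩
  · rintro P Q ⟨B, hB, h⟩; exact ⟨B, hB, hB.1 _ _ h⟩
  · rintro P Q P' ⟨B, hB, h⟩ ht
    obtain ⟨Q', h1, h2⟩ := hB.2.1 _ _ _ h ht
    exact ⟨Q', h1, B, hB, h2⟩
  · rintro P Q a P' ⟨B, hB, h⟩ ht hne
    obtain ⟨Q', h1, h2⟩ := hB.2.2.1 _ _ _ _ h ht hne
    exact ⟨Q', h1, B, hB, h2⟩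
  · rintro P Q P' ⟨B, hB, h⟩ ht
    obtain ⟨Q', h1, h2⟩ := hB.2.2.2.1 _ _ _ h ht
    exact ⟨Q', h1, B, hB, h2⟩
  · rintro P Q a P' ⟨B, hB, h⟩ ht hne
    obtain ⟨Q', h1, h2⟩ := hB.2.2.2.2 _ _ _ _ h ht hne
    exact ⟨Q', h1, B, hB, h2⟩

theorem wfrb_stuttering {A : Type} (τ : A) (n : ℕ) (hn : 1 ≤ n)
    (f : ℕ → Proc A)
    (hstep : ∀ i < n, Tr (f i) τ (f (i + 1)))
    (hends : WFRB τ (f 0) (f n)) :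
    ∀ i ≤ n, WFRB τ (f i) (f 0) := by
  have taus0 : ∀ i k, i + k ≤ n → TauStar τ (f i) (f (i + k)) := by
    intro i k
    induction k with
    | zero => intro _; exact Relation.ReflTransGen.refl
    | succ k ih =>
      intro h
      have hs : Tr (f (i + k)) τ (f (i + (k + 1))) := by
        have := hstep (i + k) (by omega)
        rwa [show i + k + 1 = i + (k + 1) by omega] at this
      exact (ih (by omega)).tail hs
  have taus : ∀ i j, i ≤ j → j ≤ n → TauStar τ (f i) (f j) := by
    intro i j hij hj
    have := taus0 i (j - i) (by omega)
    rwa [Nat.add_sub_cancel' hij] at this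
  set B : Proc A → Proc A → Prop := fun p q =>
    WFRB τ p q ∨ (∃ i ≤ n, p = f i ∧ q = f 0) ∨ (∃ i ≤ n, p = f 0 ∧ q = f i)
    with hBdef
  have W := wfrb_is_bisim τ
  have hB : IsWeakFRBisim τ B := by
    refine ⟨?_, ?_, ?_, ?_, ?_⟩
    · rintro P Q (h | ⟨i, hi, rfl, rfl⟩ | ⟨i, hi, rfl, rfl⟩)
      · exact Or.inl (W.1 _ _ h)
      · exact Or.inr (Or.inr ⟨i, hi, rfl, rfl⟩)
      · exact Or.inr (Or.inl ⟨i, hi, rfl, rfl⟩)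
    · rintro P Q P' (h | ⟨i, hi, rfl, rfl⟩ | ⟨i, hi, rfl, rfl⟩) ht
      · obtain ⟨Q', h1, h2⟩ := W.2.1 _ _ _ h ht
        exact ⟨Q', h1, Or.inl h2⟩
      · exact ⟨P', (taus 0 i (by omega) hi).tail ht, Or.inl (wfrb_refl τ P')⟩
      · obtain ⟨Q', h1, h2⟩ := W.2.1 _ _ _ hends ht
        exact ⟨Q', (taus i n hi le_rfl).trans h1, Or.inl h2⟩
    · rintro P Q a P' (h | ⟨i, hi, rfl, rfl⟩ | ⟨i, hi, rfl, rfl⟩) ht hne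
      · obtain ⟨Q', h1, h2⟩ := W.2.2.1 _ _ _ _ h ht hne
        exact ⟨Q', h1, Or.inl h2⟩
      · exact ⟨P', ⟨f i, P', taus 0 i (by omega) hi, ht, Relation.ReflTransGen.refl⟩,
          Or.inl (wfrb_refl τ P')⟩
      · obtain ⟨Q', ⟨Q1, Q2, hs1, hs2, hs3⟩, h2⟩ := W.2.2.1 _ _ _ _ hends ht hne
        exact ⟨Q', ⟨Q1, Q2, (taus i n hi le_rfl).trans hs1, hs2, hs3⟩, Or.inl h2⟩
    · rintro P Q P' (h | ⟨i, hi, rfl, rfl⟩ | ⟨i, hi, rfl, rfl⟩) ht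
      · obtain ⟨Q', h1, h2⟩ := W.2.2.2.1 _ _ _ h ht
        exact ⟨Q', h1, Or.inl h2⟩
      · rcases Nat.eq_zero_or_pos i with rfl | hpos
        · exact ⟨P', Relation.ReflTransGen.single ht, Or.inl (wfrb_refl τ P')⟩
        · have hs : Tr (f (i - 1)) τ (f i) := by
            have := hstep (i - 1) (by omega)
            rwa [show i - 1 + 1 = i by omega] at this
          obtain ⟨hP', -⟩ := tr_rev_det ht hs
          exact ⟨f 0, Relation.ReflTransGen.refl,
            Or.inr (Or.inl ⟨i - 1, by omega, hP', rfl⟩)⟩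
      · exact ⟨P', Relation.ReflTransGen.head ht (taus 0 i (by omega) hi),
          Or.inl (wfrb_refl τ P')⟩
    · rintro P Q a P' (h | ⟨i, hi, rfl, rfl⟩ | ⟨i, hi, rfl, rfl⟩) ht hne
      · obtain ⟨Q', h1, h2⟩ := W.2.2.2.2 _ _ _ _ h ht hne
        exact ⟨Q', h1, Or.inl h2⟩
      · rcases Nat.eq_zero_or_pos i with rfl | hpos
        · exact ⟨P', ⟨P', f 0, Relation.ReflTransGen.refl, ht, Relation.ReflTransGen.refl⟩,
            Or.inl (wfrb_refl τ P')⟩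
        · have hs : Tr (f (i - 1)) τ (f i) := by
            have := hstep (i - 1) (by omega)
            rwa [show i - 1 + 1 = i by omega] at this
          obtain ⟨-, hτ⟩ := tr_rev_det ht hs
          exact absurd hτ hne
      · exact ⟨P', ⟨P', f 0, Relation.ReflTransGen.refl, ht, taus 0 i (by omega) hi⟩,
          Or.inl (wfrb_refl τ P')⟩
  intro i hi
  exact ⟨B, hB, Or.inr (Or.inl ⟨i, hi, rfl, rfl⟩)⟩
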